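/- If F : A[τ₁] → A[τ₂] is a color-invariant annotated function, then F is an enrichment of the ordinary function f defined by f(v) = |F(dc(v))|; that is, for every annotated value v of type τ₁, f(|v|) = |F(v)|. -/
import Mathlib


abbrev Color := ℕ

mutual
inductive RVal : Type where
  | int : ℤ → RVal
  | bool : Bool → RVal
  | pair : AVal → AVal → RVal
  | coll : List AVal → RVal
inductive AVal : Type where
  | ann : RVal → Set Color → AVal
end

inductive Val : Type where
  | int : ℤ → Val
  | bool : Bool → Val
  | pair : Val → Val → Val
  | coll : List Val → Val

mutual
def eraseA : AVal → Val
  | .ann w _ => eraseR w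
def eraseR : RVal → Val
  | .int i => .int i
  | .bool b => .bool b
  | .pair v₁ v₂ => .pair (eraseA v₁) (eraseA v₂)
  | .coll vs => .coll (eraseList vs)
def eraseList : List AVal → List Val
  | [] => []
  | v :: vs => eraseA v :: eraseList vs
end

mutual
def colorsA : AVal → Set Color
  | .ann w Φ => Φ ∪ colorsR w
def colorsR : RVal → Set Color
  | .int _ => ∅
  | .bool _ => ∅
  | .pair v₁ v₂ => colorsA v₁ ∪ colorsA v₂
  | .coll vs => colorsList vs
def colorsList : List AVal → Set Color
  | [] => ∅
  | v :: vs => colorsA v ∪ colorsList vs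
end

def substSet (α : Color → Set Color) (Φ : Set Color) : Set Color := ⋃ c ∈ Φ, α c

mutual
def substA (α : Color → Set Color) : AVal → AVal
  | .ann w Φ => .ann (substR α w) (substSet α Φ)
def substR (α : Color → Set Color) : RVal → RVal
  | .int i => .int i
  | .bool b => .bool b
  | .pair v₁ v₂ => .pair (substA α v₁) (substA α v₂)
  | .coll vs => .coll (substList α vs)
def substList (α : Color → Set Color) : List AVal → List AVal
  | [] => []
  | v :: vs => substA α v :: substList α vs
end

-- Distinctly-colored: every annotation a singleton, no color used twice.
mutual
def DistA : AVal → Prop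
  | .ann w Φ => (∃ c, Φ = {c}) ∧ Φ ∩ colorsR w = ∅ ∧ DistR w
def DistR : RVal → Prop
  | .int _ => True
  | .bool _ => True
  | .pair v₁ v₂ => DistA v₁ ∧ DistA v₂ ∧ colorsA v₁ ∩ colorsA v₂ = ∅
  | .coll vs => DistList vs
def DistList : List AVal → Prop
  | [] => True
  | v :: vs => DistA v ∧ DistList vs ∧ colorsA v ∩ colorsList vs = ∅
end

-- "Equal except at c"
mutual
inductive EqExA (c : Color) : AVal → AVal → Prop where
  | same : ∀ {w₁ w₂ : RVal} {Φ : Set Color}, EqExR c w₁ w₂ → EqExA c (.ann w₁ Φ) (.ann w₂ Φ)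
  | escape : ∀ {w₁ w₂ : RVal} {Φ₁ Φ₂ : Set Color}, c ∈ Φ₁ → c ∈ Φ₂ → EqExA c (.ann w₁ Φ₁) (.ann w₂ Φ₂)
inductive EqExR (c : Color) : RVal → RVal → Prop where
  | int : ∀ i : ℤ, EqExR c (.int i) (.int i)
  | bool : ∀ b : Bool, EqExR c (.bool b) (.bool b)
  | pair : ∀ {v₁ v₂ v₁' v₂' : AVal}, EqExA c v₁ v₁' → EqExA c v₂ v₂' → EqExR c (.pair v₁ v₂) (.pair v₁' v₂')
  | coll : ∀ {vs vs' : List AVal}, EqExL c vs vs' → EqExR c (.coll vs) (.coll vs')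
inductive EqExL (c : Color) : List AVal → List AVal → Prop where
  | nil : EqExL c [] []
  | cons : ∀ {v v' : AVal} {vs vs' : List AVal}, EqExA c v v' → EqExL c vs vs' → EqExL c (v :: vs) (v' :: vs')
end

inductive Ty : Type where
  | int : Ty
  | bool : Ty
  | pair : Ty → Ty → Ty
  | coll : Ty → Ty

inductive HasTy : Val → Ty → Prop where
  | int : ∀ i : ℤ, HasTy (.int i) .int
  | bool : ∀ b : Bool, HasTy (.bool b) .bool
  | pair : ∀ {v₁ v₂ t₁ t₂}, HasTy v₁ t₁ → HasTy v₂ t₂ → HasTy (.pair v₁ v₂) (.pair t₁ t₂)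
  | coll : ∀ {vs t}, (∀ v ∈ vs, HasTy v t) → HasTy (.coll vs) (.coll t)

/-- v is an annotated value of (ordinary) type τ. -/
def ATyped (v : AVal) (t : Ty) : Prop := HasTy (eraseA v) t

/-- Add an annotation set to the top-level annotation. -/
def addTop (v : AVal) (Φ : Set Color) : AVal :=
  match v with
  | .ann w Ψ => .ann w (Ψ ∪ Φ)

/- Annotated types -/
mutual
inductive ATy : Type where
  | ann : RTy → Set Color → ATy
inductive RTy : Type where
  | int : RTy
  | bool : RTy
  | pair : ATy → ATy → RTy
  | coll : ATy → RTy
end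

mutual
def teraseA : ATy → Ty
  | .ann w _ => teraseR w
def teraseR : RTy → Ty
  | .int => .int
  | .bool => .bool
  | .pair t₁ t₂ => .pair (teraseA t₁) (teraseA t₂)
  | .coll t => .coll (teraseA t)
end

mutual
def tcolorsA : ATy → Set Color
  | .ann w Φ => Φ ∪ tcolorsR w
def tcolorsR : RTy → Set Color
  | .int => ∅
  | .bool => ∅
  | .pair t₁ t₂ => tcolorsA t₁ ∪ tcolorsA t₂
  | .coll t => tcolorsA t
end

mutual
def mergeA : ATy → ATy → ATy
  | .ann w₁ Φ₁, .ann w₂ Φ₂ => .ann (mergeR w₁ w₂) (Φ₁ ∪ Φ₂)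
def mergeR : RTy → RTy → RTy
  | .int, .int => .int
  | .bool, .bool => .bool
  | .pair a b, .pair a' b' => .pair (mergeA a a') (mergeA b b')
  | .coll a, .coll a' => .coll (mergeA a a')
  | w, _ => w
end

-- Semantics of annotated types: v ∈ A[τ̂].
mutual
def memA : AVal → ATy → Prop
  | .ann w Ψ, .ann ω Φ => Ψ ⊆ Φ ∧ memR w ω
def memR : RVal → RTy → Prop
  | .int _, .int => True
  | .bool _, .bool => True
  | .pair v₁ v₂, .pair t₁ t₂ => memA v₁ t₁ ∧ memA v₂ t₂
  | .coll vs, .coll t => memList vs t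
  | _, _ => False
def memList : List AVal → ATy → Prop
  | [], _ => True
  | v :: vs, t => memA v t ∧ memList vs t
end


mutual
theorem erase_substA (α : Color → Set Color) (v : AVal) : eraseA (substA α v) = eraseA v := by
  match v with
  | .ann w Φ => simp [substA, eraseA, erase_substR α w]
theorem erase_substR (α : Color → Set Color) (w : RVal) : eraseR (substR α w) = eraseR w := by
  match w with
  | .int i => rfl
  | .bool b => rfl
  | .pair v₁ v₂ => simp [substR, eraseR, erase_substA α v₁, erase_substA α v₂]
  | .coll vs => simp [substR, eraseR, erase_substList α vs]
theorem erase_substList (α : Color → Set Color) (vs : List AVal) :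
    eraseList (substList α vs) = eraseList vs := by
  match vs with
  | [] => rfl
  | v :: vs => simp [substList, eraseList, erase_substA α v, erase_substList α vs]
end

mutual
theorem subst_congrA (α β : Color → Set Color) (v : AVal)
    (h : ∀ c ∈ colorsA v, α c = β c) : substA α v = substA β v := by
  match v with
  | .ann w Φ =>
    have h1 : ∀ c ∈ colorsR w, α c = β c := fun c hc => h c (Or.inr hc)
    have h2 : substSet α Φ = substSet β Φ := by
      unfold substSet
      exact Set.iUnion₂_congr fun c hc => h c (Or.inl hc)
    simp [substA, subst_congrR α β w h1, h2]
theorem subst_congrR (α β : Color → Set Color) (w : RVal)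
    (h : ∀ c ∈ colorsR w, α c = β c) : substR α w = substR β w := by
  match w with
  | .int i => rfl
  | .bool b => rfl
  | .pair v₁ v₂ =>
    simp [substR, subst_congrA α β v₁ (fun c hc => h c (Or.inl hc)),
      subst_congrA α β v₂ (fun c hc => h c (Or.inr hc))]
  | .coll vs => simp [substR, subst_congrList α β vs h]
theorem subst_congrList (α β : Color → Set Color) (vs : List AVal)
    (h : ∀ c ∈ colorsList vs, α c = β c) : substList α vs = substList β vs := by
  match vs with
  | [] => rfl
  | v :: vs =>
    simp [substList, subst_congrA α β v (fun c hc => h c (Or.inl hc)),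
      subst_congrList α β vs (fun c hc => h c (Or.inr hc))]
end

open Classical in
mutual
theorem exists_substA (d v : AVal) (hd : DistA d) (he : eraseA d = eraseA v) :
    ∃ α : Color → Set Color, substA α d = v ∧ ∀ c ∉ colorsA d, α c = {c} := by
  match d, v with
  | .ann w Φ, .ann w' Φ' =>
    obtain ⟨⟨c₀, rfl⟩, hdisj, hw⟩ := hd
    obtain ⟨α, hα, hout⟩ := exists_substR w w' hw he
    refine ⟨Function.update α c₀ Φ', ?_, ?_⟩
    · have hc₀ : c₀ ∉ colorsR w := by
        intro hc
        have : c₀ ∈ ({c₀} : Set Color) ∩ colorsR w := ⟨rfl, hc⟩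
        rw [hdisj] at this; exact this
      have : substR (Function.update α c₀ Φ') w = substR α w :=
        subst_congrR _ _ w (fun c hc => Function.update_of_ne (fun h : c = c₀ => hc₀ (h ▸ hc)) _ _)
      simp [substA, this, hα, substSet, Function.update_self]
    · intro c hc
      have h1 : c ≠ c₀ := fun h => hc (Or.inl (by simp [h, colorsA]))
      have h2 : c ∉ colorsR w := fun h => hc (Or.inr h)
      rw [Function.update_of_ne h1]; exact hout c h2
theorem exists_substR (w w' : RVal) (hd : DistR w) (he : eraseR w = eraseR w') :
    ∃ α : Color → Set Color, substR α w = w' ∧ ∀ c ∉ colorsR w, α c = {c} := by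
  match w, w' with
  | .int i, .int j => simp [eraseR] at he; exact ⟨fun c => {c}, by simp [substR, he], fun _ _ => rfl⟩
  | .bool a, .bool b => simp [eraseR] at he; exact ⟨fun c => {c}, by simp [substR, he], fun _ _ => rfl⟩
  | .pair d₁ d₂, .pair v₁ v₂ =>
    simp only [eraseR, Val.pair.injEq] at he
    obtain ⟨hd₁, hd₂, hdisj⟩ := hd
    obtain ⟨α₁, ha1, ho1⟩ := exists_substA d₁ v₁ hd₁ he.1
    obtain ⟨α₂, ha2, ho2⟩ := exists_substA d₂ v₂ hd₂ he.2
    refine ⟨fun c => if c ∈ colorsA d₁ then α₁ c else α₂ c, ?_, ?_⟩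
    · have e1 : substA (fun c => if c ∈ colorsA d₁ then α₁ c else α₂ c) d₁ = substA α₁ d₁ :=
        subst_congrA _ _ d₁ (fun c hc => by simp [hc])
      have e2 : substA (fun c => if c ∈ colorsA d₁ then α₁ c else α₂ c) d₂ = substA α₂ d₂ :=
        subst_congrA _ _ d₂ (fun c hc => by
          have : c ∉ colorsA d₁ := fun h => by
            have : c ∈ colorsA d₁ ∩ colorsA d₂ := ⟨h, hc⟩
            rw [hdisj] at this; exact this
          simp [this])
      simp [substR, e1, e2, ha1, ha2]
    · intro c hc
      have h1 : c ∉ colorsA d₁ := fun h => hc (Or.inl h)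
      have h2 : c ∉ colorsA d₂ := fun h => hc (Or.inr h)
      simp [h1, ho2 c h2]
  | .coll ds, .coll vs =>
    simp only [eraseR, Val.coll.injEq] at he
    obtain ⟨α, hα, hout⟩ := exists_substList ds vs hd he
    exact ⟨α, by simp [substR, hα], hout⟩
  | .int _, .bool _ => simp [eraseR] at he
  | .int _, .pair _ _ => simp [eraseR] at he
  | .int _, .coll _ => simp [eraseR] at he
  | .bool _, .int _ => simp [eraseR] at he
  | .bool _, .pair _ _ => simp [eraseR] at he
  | .bool _, .coll _ => simp [eraseR] at he
  | .pair _ _, .int _ => simp [eraseR] at he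
  | .pair _ _, .bool _ => simp [eraseR] at he
  | .pair _ _, .coll _ => simp [eraseR] at he
  | .coll _, .int _ => simp [eraseR] at he
  | .coll _, .bool _ => simp [eraseR] at he
  | .coll _, .pair _ _ => simp [eraseR] at he
theorem exists_substList (ds vs : List AVal) (hd : DistList ds)
    (he : eraseList ds = eraseList vs) :
    ∃ α : Color → Set Color, substList α ds = vs ∧ ∀ c ∉ colorsList ds, α c = {c} := by
  match ds, vs with
  | [], [] => exact ⟨fun c => {c}, rfl, fun _ _ => rfl⟩
  | [], v :: vs => simp [eraseList] at he
  | d :: ds, [] => simp [eraseList] at he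
  | d :: ds, v :: vs =>
    simp only [eraseList, List.cons.injEq] at he
    obtain ⟨hd₁, hds, hdisj⟩ := hd
    obtain ⟨α₁, ha1, ho1⟩ := exists_substA d v hd₁ he.1
    obtain ⟨α₂, ha2, ho2⟩ := exists_substList ds vs hds he.2
    refine ⟨fun c => if c ∈ colorsA d then α₁ c else α₂ c, ?_, ?_⟩
    · have e1 : substA (fun c => if c ∈ colorsA d then α₁ c else α₂ c) d = substA α₁ d :=
        subst_congrA _ _ d (fun c hc => by simp [hc])
      have e2 : substList (fun c => if c ∈ colorsA d then α₁ c else α₂ c) ds = substList α₂ ds :=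
        subst_congrList _ _ ds (fun c hc => by
          have : c ∉ colorsA d := fun h => by
            have : c ∈ colorsA d ∩ colorsList ds := ⟨h, hc⟩
            rw [hdisj] at this; exact this
          simp [this])
      simp [substList, e1, e2, ha1, ha2]
    · intro c hc
      have h1 : c ∉ colorsA d := fun h => hc (Or.inl h)
      have h2 : c ∉ colorsList ds := fun h => hc (Or.inr h)
      simp [h1, ho2 c h2]
end

theorem colorInvariant_enriches (τ₁ τ₂ : Ty) (F : AVal → AVal) (dc : Val → AVal)
    (hdc : ∀ v : Val, DistA (dc v) ∧ eraseA (dc v) = v)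
    (hFty : ∀ v, ATyped v τ₁ → ATyped (F v) τ₂)
    (hFinv : ∀ (α : Color → Set Color) (v : AVal), substA α (F v) = F (substA α v)) :
    ∀ v : AVal, ATyped v τ₁ → eraseA (F (dc (eraseA v))) = eraseA (F v) := by
  intro v _
  obtain ⟨hdist, herase⟩ := hdc (eraseA v)
  obtain ⟨α, hα, -⟩ := exists_substA (dc (eraseA v)) v hdist herase
  calc eraseA (F (dc (eraseA v)))
      = eraseA (substA α (F (dc (eraseA v)))) := (erase_substA α _).symm
    _ = eraseA (F (substA α (dc (eraseA v)))) := by rw [hFinv]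
    _ = eraseA (F v) := by rw [hα]
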